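/- Let 𝔖 be an interval system on a set X, let W be a complete Hausdorff commutative topological group, and let μ : 𝔖 → W be a measure. Let Σ_c𝔖 denote the closure of 𝔖 under finitely many applications of union, intersection and set difference (which is again an interval system, in fact a ring of sets). Then there exists a unique measure μ_c : Σ_c𝔖 → W extending μ. -/

import Mathlib

/-- A family `S` of subsets of `X` is an *interval system* if for all `A, B ∈ S` there exist
countable pairwise disjoint families `D₁, D₂ ⊆ S` with `⋃₀ D₁ = A \ B` and `⋃₀ D₂ = A ∩ B`. -/
def IsIntervalSystem {X : Type*} (S : Set (Set X)) : Prop :=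
  ∀ A ∈ S, ∀ B ∈ S,
    (∃ D : Set (Set X), D ⊆ S ∧ D.Countable ∧ D.PairwiseDisjoint id ∧ ⋃₀ D = A \ B) ∧
    (∃ D : Set (Set X), D ⊆ S ∧ D.Countable ∧ D.PairwiseDisjoint id ∧ ⋃₀ D = A ∩ B)

/-- A map `μ` defined on the sets of `X`, with values in a commutative topological group, is
a *measure* on the set system `S` if it is σ-additive on `S`: whenever a member `B` of `S`
is the union of a countable pairwise disjoint family `(A i)` of members of `S`, the net of
finite partial sums `∑ i ∈ Ξ, μ (A i)` (over finite `Ξ`, directed by inclusion) converges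
to `μ B`, i.e. `HasSum (fun i => μ (A i)) (μ B)`. -/
def IsAddMeasure {X W : Type*} [AddCommMonoid W] [TopologicalSpace W]
    (S : Set (Set X)) (μ : Set X → W) : Prop :=
  ∀ (ι : Type) (A : ι → Set X) (B : Set X), Countable ι → B ∈ S →
    (∀ i, A i ∈ S) → (Pairwise fun i j => Disjoint (A i) (A j)) →
    (⋃ i, A i) = B → HasSum (fun i => μ (A i)) (μ B)

/-- The closure of `S` under finitely many applications of `∪`, `∩` and `\`. -/
inductive Constructible {X : Type*} (S : Set (Set X)) : Set X → Prop
  | base {A : Set X} : A ∈ S → Constructible S A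
  | union {A B : Set X} : Constructible S A → Constructible S B → Constructible S (A ∪ B)
  | inter {A B : Set X} : Constructible S A → Constructible S B → Constructible S (A ∩ B)
  | sdiff {A B : Set X} : Constructible S A → Constructible S B → Constructible S (A \ B)

/-!
Every constructible set is a countable disjoint union of members of `S`. A measure extending `μ`
must take the value `∑ i, μ (f i)` on a set partitioned by `f`, which gives uniqueness. For
existence one shows, by induction on the construction, that all partitions of a constructible set
have a common sum. For a disjoint union `Z₁ ∪ Z₂`, a partition is refined by its traces on `Z₁`
and on `Z₂`, and σ-additivity of `μ` on each of its members regroups the refinement. For a piece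
`Z₁` of `Z₁ ∪ Z₂`, every partition of `Z₁` completed by one fixed partition of `Z₂` is a
partition of `Z₁ ∪ Z₂`, so its sum is determined.
-/

open Set Function

section Partition

variable {X : Type*}

structure IsPartition (S : Set (Set X)) (A : Set X) {ι : Type} (f : ι → Set X) : Prop where
  countable : Countable ι
  mem : ∀ i, f i ∈ S
  pairwise_disjoint : Pairwise (Disjoint on f)
  iUnion_eq : ⋃ i, f i = A

def HasPartition (S : Set (Set X)) (A : Set X) : Prop :=
  ∃ (ι : Type) (f : ι → Set X), IsPartition S A f

variable {S : Set (Set X)}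

theorem IsPartition.subset {A : Set X} {ι : Type} {f : ι → Set X} (hf : IsPartition S A f)
    (i : ι) : f i ⊆ A :=
  hf.iUnion_eq ▸ subset_iUnion f i

theorem IsPartition.sumElim {A B : Set X} {ι κ : Type} {f : ι → Set X} {g : κ → Set X}
    (hf : IsPartition S A f) (hg : IsPartition S B g) (hAB : Disjoint A B) :
    IsPartition S (A ∪ B) (Sum.elim f g) where
  countable := have := hf.countable; have := hg.countable; inferInstance
  mem := by rintro (i | j) <;> simp [hf.mem, hg.mem]
  pairwise_disjoint := by
    rintro (i | j) (i' | j') hne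
    · exact hf.pairwise_disjoint fun h => hne (congrArg _ h)
    · exact hAB.mono (hf.subset i) (hg.subset j')
    · exact (hAB.mono (hf.subset i') (hg.subset j)).symm
    · exact hg.pairwise_disjoint fun h => hne (congrArg _ h)
  iUnion_eq := by rw [iUnion_sumElim, hf.iUnion_eq, hg.iUnion_eq]

theorem IsPartition.sigma {ι : Type} [Countable ι] {κ : ι → Type} {A : ι → Set X}
    {g : ∀ i, κ i → Set X} (hA : Pairwise (Disjoint on A)) (hg : ∀ i, IsPartition S (A i) (g i)) :
    IsPartition S (⋃ i, A i) (fun p : Σ i, κ i => g p.1 p.2) where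
  countable := have := fun i => (hg i).countable; inferInstance
  mem p := (hg p.1).mem p.2
  pairwise_disjoint := by
    rintro ⟨i, k⟩ ⟨j, l⟩ hne
    by_cases hij : i = j
    · subst hij
      exact (hg i).pairwise_disjoint fun h => hne (by subst h; rfl)
    · exact (hA hij).mono ((hg i).subset k) ((hg j).subset l)
  iUnion_eq := by
    rw [iUnion_sigma]
    exact iUnion_congr fun i => (hg i).iUnion_eq

theorem hasPartition_of_sUnion {A : Set X} {D : Set (Set X)} (hDS : D ⊆ S) (hD : D.Countable)
    (hdisj : D.PairwiseDisjoint id) (hA : ⋃₀ D = A) : HasPartition S A := by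
  have := hD.to_subtype
  let e := (equivShrink.{0} D).symm
  refine ⟨Shrink.{0} D, fun i => e i, Countable.of_equiv _ (equivShrink.{0} D),
    fun i => hDS (e i).2, fun i j hij => hdisj.subtype _ _ (e.injective.ne hij), ?_⟩
  rw [← hA, sUnion_eq_iUnion]
  exact e.surjective.iUnion_comp fun d : D => (d : Set X)

theorem HasPartition.iUnion {ι : Type} [Countable ι] {A : ι → Set X}
    (hA : Pairwise (Disjoint on A)) (h : ∀ i, HasPartition S (A i)) :
    HasPartition S (⋃ i, A i) := by
  choose κ g hg using h
  exact ⟨_, _, IsPartition.sigma hA hg⟩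

theorem HasPartition.union {A B : Set X} (hA : HasPartition S A) (hB : HasPartition S B)
    (hAB : Disjoint A B) : HasPartition S (A ∪ B) := by
  obtain ⟨ι, f, hf⟩ := hA
  obtain ⟨κ, g, hg⟩ := hB
  exact ⟨_, _, hf.sumElim hg hAB⟩

theorem HasPartition.sdiff_of_forall_mem {B C : Set X} (hB : ∀ c ∈ S, HasPartition S (c \ B))
    (hC : HasPartition S C) : HasPartition S (C \ B) := by
  obtain ⟨ι, f, hf⟩ := hC
  have := hf.countable
  rw [← hf.iUnion_eq, iUnion_sdiff]
  exact .iUnion (fun i j hij => (hf.pairwise_disjoint hij).mono sdiff_subset sdiff_subset)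
    fun i => hB _ (hf.mem i)

variable (hS : IsIntervalSystem S)
include hS

theorem hasPartition_inter_of_mem {a b : Set X} (ha : a ∈ S) (hb : b ∈ S) :
    HasPartition S (a ∩ b) := by
  obtain ⟨-, D, hDS, hD, hdisj, hU⟩ := hS a ha b hb
  exact hasPartition_of_sUnion hDS hD hdisj hU

theorem hasPartition_sdiff_of_mem {a b : Set X} (ha : a ∈ S) (hb : b ∈ S) :
    HasPartition S (a \ b) := by
  obtain ⟨⟨D, hDS, hD, hdisj, hU⟩, -⟩ := hS a ha b hb
  exact hasPartition_of_sUnion hDS hD hdisj hU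

theorem hasPartition_of_mem {a : Set X} (ha : a ∈ S) : HasPartition S a :=
  inter_self a ▸ hasPartition_inter_of_mem hS ha ha

theorem HasPartition.inter {A B : Set X} (hA : HasPartition S A) (hB : HasPartition S B) :
    HasPartition S (A ∩ B) := by
  obtain ⟨ι, f, hf⟩ := hA
  obtain ⟨κ, g, hg⟩ := hB
  have := hf.countable
  have := hg.countable
  rw [← hf.iUnion_eq, ← hg.iUnion_eq, iUnion_inter_iUnion,
    ← iUnion_prod' fun p : ι × κ => f p.1 ∩ g p.2]
  refine .iUnion (fun p q hpq => ?_) fun p =>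
    hasPartition_inter_of_mem hS (hf.mem p.1) (hg.mem p.2)
  obtain h | h : p.1 ≠ q.1 ∨ p.2 ≠ q.2 := by
    by_contra! h
    exact hpq (Prod.ext h.1 h.2)
  · exact (hf.pairwise_disjoint h).mono inter_subset_left inter_subset_left
  · exact (hg.pairwise_disjoint h).mono inter_subset_right inter_subset_right

/-- The differences `c \ B` have to be carried along the induction: for `B = ⋃ j, b j` the set
`c \ B = ⋂ j, c \ b j` is a countable intersection, which need not have a partition. -/
theorem Constructible.hasPartition_and_sdiff {B : Set X} (hB : Constructible S B) :
    HasPartition S B ∧ ∀ c ∈ S, HasPartition S (c \ B) := by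
  induction hB with
  | base hb => exact ⟨hasPartition_of_mem hS hb, fun c hc => hasPartition_sdiff_of_mem hS hc hb⟩
  | @union B₁ B₂ _ _ ih₁ ih₂ =>
    refine ⟨?_, fun c hc => ?_⟩
    · rw [← union_sdiff_self]
      exact ih₁.1.union (.sdiff_of_forall_mem ih₁.2 ih₂.1) disjoint_sdiff_right
    · rw [← sdiff_sdiff]
      exact .sdiff_of_forall_mem ih₂.2 (ih₁.2 c hc)
  | @inter B₁ B₂ _ _ ih₁ ih₂ =>
    refine ⟨ih₁.1.inter hS ih₂.1, fun c hc => ?_⟩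
    have hsplit : (c \ B₁) ∪ ((c ∩ B₁) \ B₂) = c \ (B₁ ∩ B₂) := by
      ext x; simp only [mem_union, mem_sdiff, mem_inter_iff]; tauto
    rw [← hsplit]
    exact (ih₁.2 c hc).union
      (.sdiff_of_forall_mem ih₂.2 ((hasPartition_of_mem hS hc).inter hS ih₁.1))
      (disjoint_sdiff_left.mono_right (sdiff_subset.trans inter_subset_right))
  | @sdiff B₁ B₂ _ _ ih₁ ih₂ =>
    refine ⟨.sdiff_of_forall_mem ih₂.2 ih₁.1, fun c hc => ?_⟩
    have hsplit : (c \ B₁) ∪ (c ∩ B₁ ∩ B₂) = c \ (B₁ \ B₂) := by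
      ext x; simp only [mem_union, mem_sdiff, mem_inter_iff]; tauto
    rw [← hsplit]
    exact (ih₁.2 c hc).union (((hasPartition_of_mem hS hc).inter hS ih₁.1).inter hS ih₂.1)
      (disjoint_sdiff_left.mono_right (inter_subset_left.trans inter_subset_right))

theorem Constructible.hasPartition {A : Set X} (hA : Constructible S A) : HasPartition S A :=
  (hA.hasPartition_and_sdiff hS).1

theorem Constructible.hasPartition_sdiff {B C : Set X} (hB : Constructible S B)
    (hC : HasPartition S C) : HasPartition S (C \ B) :=
  .sdiff_of_forall_mem (hB.hasPartition_and_sdiff hS).2 hC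

end Partition

section PartitionSum

variable {X W : Type*} {S : Set (Set X)} {μ : Set X → W}

theorem IsAddMeasure.hasSum [AddCommMonoid W] [TopologicalSpace W] (hμ : IsAddMeasure S μ)
    {B : Set X} (hB : B ∈ S) {ι : Type} {f : ι → Set X} (hf : IsPartition S B f) :
    HasSum (μ ∘ f) (μ B) :=
  hμ ι f B hf.countable hB hf.mem hf.pairwise_disjoint hf.iUnion_eq

theorem IsAddMeasure.eq_of_eqOn [AddCommMonoid W] [TopologicalSpace W] [T2Space W]
    {T : Set (Set X)} {ν₁ ν₂ : Set X → W} (hν₁ : IsAddMeasure T ν₁) (hν₂ : IsAddMeasure T ν₂)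
    (hST : S ⊆ T) (heq : EqOn ν₁ ν₂ S) {A : Set X} (hA : A ∈ T) (hpart : HasPartition S A) :
    ν₁ A = ν₂ A := by
  obtain ⟨ι, f, hf⟩ := hpart
  have hfT : IsPartition T A f := { hf with mem := fun i => hST (hf.mem i) }
  refine (hν₁.hasSum hA hfT).unique ?_
  convert hν₂.hasSum hA hfT using 1
  exact funext fun i => heq (hf.mem i)

/-- `t` is the common sum of `μ` over all partitions of `A`: the value of the extension
at `A`. -/
def HasPartitionSum [AddCommMonoid W] [TopologicalSpace W] (S : Set (Set X)) (μ : Set X → W)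
    (A : Set X) (t : W) : Prop :=
  ∀ (ι : Type) (f : ι → Set X), IsPartition S A f → HasSum (μ ∘ f) t

theorem HasPartitionSum.hasSum_iUnion [AddCommMonoid W] [TopologicalSpace W] [ContinuousAdd W]
    [RegularSpace W] {ι : Type} [Countable ι] {A : ι → Set X} {t : W} {s : ι → W}
    (hA : Pairwise (Disjoint on A)) (hpart : ∀ i, HasPartition S (A i))
    (h : HasPartitionSum S μ (⋃ i, A i) t) (hs : ∀ i, HasPartitionSum S μ (A i) (s i)) :
    HasSum s t := by
  choose κ g hg using hpart
  exact (h _ _ (.sigma hA hg)).sigma fun i => hs i _ _ (hg i)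

/-- Completeness enters here: a subfamily of a summable family is summable. -/
theorem HasPartitionSum.of_union_left [AddCommGroup W] [UniformSpace W] [IsUniformAddGroup W]
    [CompleteSpace W] [T2Space W] {Z₁ Z₂ : Set X} {t : W} {κ : Type} {g : κ → Set X}
    (h : HasPartitionSum S μ (Z₁ ∪ Z₂) t) (hg : IsPartition S Z₂ g) (hZ : Disjoint Z₁ Z₂) :
    HasPartitionSum S μ Z₁ (t - ∑' k, μ (g k)) := by
  intro ι f hf
  have htot : HasSum (μ ∘ Sum.elim f g) t := h _ _ (hf.sumElim hg hZ)
  have hf_sum : HasSum (μ ∘ f) (∑' i, μ (f i)) :=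
    (htot.summable.comp_injective Sum.inl_injective).hasSum
  have hg_sum : HasSum (μ ∘ g) (∑' k, μ (g k)) :=
    (htot.summable.comp_injective Sum.inr_injective).hasSum
  rw [htot.unique (hf_sum.sum hg_sum), add_sub_cancel_right]
  exact hf_sum

theorem HasPartitionSum.union [AddCommMonoid W] [TopologicalSpace W] [ContinuousAdd W]
    [RegularSpace W] (hS : IsIntervalSystem S) (hμ : IsAddMeasure S μ) {Z₁ Z₂ : Set X}
    {t₁ t₂ : W} (h₁ : HasPartitionSum S μ Z₁ t₁) (h₂ : HasPartitionSum S μ Z₂ t₂)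
    (hZ₁ : HasPartition S Z₁) (hZ₂ : HasPartition S Z₂) (hZ : Disjoint Z₁ Z₂) :
    HasPartitionSum S μ (Z₁ ∪ Z₂) (t₁ + t₂) := by
  intro ι f hf
  have := hf.countable
  choose κ p hp using fun i => (hasPartition_of_mem hS (hf.mem i)).inter hS hZ₁
  choose κ' q hq using fun i => (hasPartition_of_mem hS (hf.mem i)).inter hS hZ₂
  have hdisj (Z : Set X) : Pairwise (Disjoint on fun i => f i ∩ Z) := fun i j hij =>
    (hf.pairwise_disjoint hij).mono inter_subset_left inter_subset_left
  have hcover (Z : Set X) (hZ : Z ⊆ Z₁ ∪ Z₂) : ⋃ i, f i ∩ Z = Z := by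
    rw [← iUnion_inter, hf.iUnion_eq, inter_eq_right.2 hZ]
  have hP := IsPartition.sigma (hdisj Z₁) hp
  have hQ := IsPartition.sigma (hdisj Z₂) hq
  rw [hcover _ subset_union_left] at hP
  rw [hcover _ subset_union_right] at hQ
  have hsplit (i : ι) : IsPartition S (f i) (Sum.elim (p i) (q i)) := by
    have := (hp i).sumElim (hq i) (hZ.mono inter_subset_right inter_subset_right)
    rwa [← inter_union_distrib_left, inter_eq_left.2 (hf.subset i)] at this
  have hrefine :
      HasSum (fun x : Σ i, κ i ⊕ κ' i => μ (Sum.elim (p x.1) (q x.1) x.2)) (t₁ + t₂) :=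
    ((Equiv.sigmaSumDistrib κ κ').symm.hasSum_iff).1 ((h₁ _ _ hP).sum (h₂ _ _ hQ))
  exact hrefine.sigma fun i => hμ.hasSum (hf.mem i) (hsplit i)

end PartitionSum

theorem Constructible.exists_hasPartitionSum {X W : Type*} [AddCommGroup W] [UniformSpace W]
    [IsUniformAddGroup W] [CompleteSpace W] [T2Space W] {S : Set (Set X)} {μ : Set X → W}
    (hS : IsIntervalSystem S) (hμ : IsAddMeasure S μ) {A : Set X} (hA : Constructible S A) :
    ∃ t, HasPartitionSum S μ A t := by
  induction hA with
  | base ha => exact ⟨μ _, fun _ _ hf => hμ.hasSum ha hf⟩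
  | @union A B hA hB ihA ihB =>
    obtain ⟨tA, htA⟩ := ihA
    obtain ⟨tB, htB⟩ := ihB
    obtain ⟨κ, g, hg⟩ := (hA.hasPartition hS).inter hS (hB.hasPartition hS)
    rw [← sdiff_union_inter A B] at htA
    have hAB := htA.of_union_left hg (disjoint_sdiff_left.mono_right inter_subset_right)
    rw [← sdiff_union_self]
    exact ⟨_, hAB.union hS hμ htB (hB.hasPartition_sdiff hS (hA.hasPartition hS))
      (hB.hasPartition hS) disjoint_sdiff_left⟩
  | @inter A B hA hB ihA _ =>
    obtain ⟨tA, htA⟩ := ihA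
    obtain ⟨κ, g, hg⟩ := hB.hasPartition_sdiff hS (hA.hasPartition hS)
    rw [← inter_union_sdiff A B] at htA
    exact ⟨_, htA.of_union_left hg (disjoint_sdiff_left.mono_right inter_subset_right).symm⟩
  | @sdiff A B hA hB ihA _ =>
    obtain ⟨tA, htA⟩ := ihA
    obtain ⟨κ, g, hg⟩ := (hA.hasPartition hS).inter hS (hB.hasPartition hS)
    rw [← sdiff_union_inter A B] at htA
    exact ⟨_, htA.of_union_left hg (disjoint_sdiff_left.mono_right inter_subset_right)⟩

/-- A measure `μ : S → W` on an interval system `S` has a unique extension to a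
measure on the `(∪, ∩, \)`-constructible closure of `S`. -/
theorem statement8 {X W : Type*}
    [AddCommGroup W] [UniformSpace W] [IsUniformAddGroup W] [CompleteSpace W] [T2Space W]
    (S : Set (Set X)) (hS : IsIntervalSystem S)
    (μ : Set X → W) (hμ : IsAddMeasure S μ) :
    (∃ ν : Set X → W, (∀ A ∈ S, ν A = μ A) ∧
        IsAddMeasure {A : Set X | Constructible S A} ν) ∧
    (∀ ν₁ ν₂ : Set X → W, (∀ A ∈ S, ν₁ A = μ A) → (∀ A ∈ S, ν₂ A = μ A) →
      IsAddMeasure {A : Set X | Constructible S A} ν₁ →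
      IsAddMeasure {A : Set X | Constructible S A} ν₂ →
      ∀ A : Set X, Constructible S A → ν₁ A = ν₂ A) := by
  classical
  let ν : Set X → W := fun A =>
    if h : ∃ t, HasPartitionSum S μ A t then h.choose else 0
  have hν {A : Set X} (hA : Constructible S A) : HasPartitionSum S μ A (ν A) := by
    have h := hA.exists_hasPartitionSum hS hμ
    simpa only [ν, dif_pos h] using h.choose_spec
  refine ⟨⟨ν, fun A hA => ?_, fun ι A B _ hB hA hdisj hU => ?_⟩, ?_⟩
  · obtain ⟨ι, f, hf⟩ := hasPartition_of_mem hS hA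
    exact (hν (.base hA) ι f hf).unique (hμ.hasSum hA hf)
  · subst hU
    exact (hν hB).hasSum_iUnion hdisj (fun i => (hA i).hasPartition hS) fun i => hν (hA i)
  · intro ν₁ ν₂ h₁ h₂ hm₁ hm₂ A hA
    exact hm₁.eq_of_eqOn hm₂ (fun _ => .base) (fun a ha => (h₁ a ha).trans (h₂ a ha).symm) hA
      (hA.hasPartition hS)
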